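/- Let δ₁, δ₂ > 0 and let W = [w₁, w₂] ∈ ℝ^{d×2} be a minimizer of ‖w₁‖² + ‖w₂‖² subject to the constraints δ_{y_i}(w_{y_i} - w_c)ᵀ h_i ≥ 1 for all i and all c ≠ y_i (the LDT max-margin problem for binary classification with labels y_i ∈ {1,2}). Then w₁ + w₂ = 0. -/

import Mathlib

open scoped InnerProductSpace

/-! Translating every class vector by the same vector does not change the differences
`w (y i) - w c`, so the recentred pair `w c - m`, with `m` the mean of `w 0` and `w 1`, is
again feasible. Recentring lowers the sum of squared norms by exactly `2 ‖m‖²`, so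
optimality of `w` forces `m = 0`. -/

section Recentering

variable {ι E : Type*} [Fintype ι] [NormedAddCommGroup E] [InnerProductSpace ℝ E]

noncomputable def familyMean (w : ι → E) : E := (Fintype.card ι : ℝ)⁻¹ • ∑ c, w c

theorem sum_eq_card_smul_familyMean (w : ι → E) :
    ∑ c, w c = (Fintype.card ι : ℝ) • familyMean w := by
  rcases isEmpty_or_nonempty ι with hι | hι
  · simp
  · rw [familyMean, smul_smul, mul_inv_cancel₀ (by positivity), one_smul]

theorem sum_norm_sq_sub_familyMean (w : ι → E) :
    ∑ c, ‖w c - familyMean w‖ ^ 2 =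
      ∑ c, ‖w c‖ ^ 2 - Fintype.card ι * ‖familyMean w‖ ^ 2 := by
  set m := familyMean w
  have hcross : ∑ c, ⟪w c, m⟫_ℝ = Fintype.card ι * ‖m‖ ^ 2 := by
    rw [← sum_inner, sum_eq_card_smul_familyMean, real_inner_smul_left,
      real_inner_self_eq_norm_sq]
  simp only [norm_sub_sq_real, Finset.sum_add_distrib, Finset.sum_sub_distrib,
    ← Finset.mul_sum, hcross, Finset.sum_const, Finset.card_univ, nsmul_eq_mul]
  ring

end Recentering

theorem ldt_centering {d n : ℕ}
    (h : Fin n → EuclideanSpace ℝ (Fin d)) (y : Fin n → Fin 2)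
    (δ : Fin 2 → ℝ)
    (w : Fin 2 → EuclideanSpace ℝ (Fin d))
    (feas : ∀ i, ∀ c, c ≠ y i → δ (y i) * ⟪w (y i) - w c, h i⟫_ℝ ≥ 1)
    (opt : ∀ w' : Fin 2 → EuclideanSpace ℝ (Fin d),
      (∀ i, ∀ c, c ≠ y i → δ (y i) * ⟪w' (y i) - w' c, h i⟫_ℝ ≥ 1) →
      ‖w 0‖ ^ 2 + ‖w 1‖ ^ 2 ≤ ‖w' 0‖ ^ 2 + ‖w' 1‖ ^ 2) :
    w 0 + w 1 = 0 := by
  have hdecrease := sum_norm_sq_sub_familyMean w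
  simp only [Fin.sum_univ_two, Fintype.card_fin, Nat.cast_ofNat] at hdecrease
  have hrecentred := opt (fun c => w c - familyMean w) fun i c hc => by
    simpa only [sub_sub_sub_cancel_right] using feas i c hc
  have hmean : ‖familyMean w‖ ^ 2 = 0 := by linarith [sq_nonneg ‖familyMean w‖]
  rw [sq_eq_zero_iff, norm_eq_zero, familyMean, Fin.sum_univ_two, smul_eq_zero] at hmean
  exact hmean.resolve_left (by norm_num)
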